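/- Let ω > 1 with ω + 1 ≤ σ, and let t0 < t1 with ω − 1 ≤ t1 − t0 ≤ ω + 1. Set v := (R(t0) + R(t1))/(t1 − t0). Then 𝒦⁻(ω) ≤ ½v² + R'(t0)·v ≤ 𝒦⁺(ω), where 𝒦⁻(ω) := 2R_min²/(ω+1)² − 2‖R'‖·R_max/(ω+1) and 𝒦⁺(ω) := 2R_max²/(ω−1)² + 2‖R'‖·R_max/(ω−1). (This is the key estimate bounding, up to O(c²), the K-coordinate of any orbit of the billiard map whose consecutive bouncing times differ from its rotation number ω by at most 1.) -/

import Mathlib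

noncomputable section

/-- Sup-norm of a function (for a continuous 1-periodic function this is the maximum of `|f|`). -/
def supNorm (f : ℝ → ℝ) : ℝ := sSup (Set.range fun t => |f t|)

/-- Minimum value of `R` (attained for a continuous 1-periodic `R`). -/
def Rmin (R : ℝ → ℝ) : ℝ := sInf (Set.range R)

/-- Maximum value of `R` (attained for a continuous 1-periodic `R`). -/
def Rmax (R : ℝ → ℝ) : ℝ := sSup (Set.range R)

/-- The constant `σ = min { R_min/(2‖R'‖) , 2√(1+√(1−ε²))·R_min/√‖(R²)''‖ }`. -/
def sigmaR (R : ℝ → ℝ) (ε : ℝ) : ℝ :=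
  min (Rmin R / (2 * supNorm (deriv R)))
    (2 * Real.sqrt (1 + Real.sqrt (1 - ε ^ 2)) * Rmin R /
      Real.sqrt (supNorm (deriv (deriv (fun t => R t ^ 2)))))

/-! The speed `v = (R t0 + R t1)/(t1 - t0)` lies between `w = 2 R_min/(ω+1)` and
`U = 2 R_max/(ω-1)`. For `|a| ≤ ‖R'‖` the quadratic `v ↦ v²/2 + a v` is increasing once
`v ≥ ‖R'‖`, and the condition `ω + 1 ≤ R_min/(2‖R'‖)` built into `σ` gives `w ≥ 4‖R'‖`;
so the lower bound is its value at `w` with `a = -‖R'‖` (weakened by `R_min ≤ R_max`), the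
upper bound its value at `U` with `a = ‖R'‖`. -/

namespace Function.Periodic

variable {f : ℝ → ℝ} {c : ℝ}

theorem deriv (hf : Periodic f c) : Periodic (_root_.deriv f) c := fun x => by
  simpa only [hf.funext] using (deriv_comp_add_const (f := f) (a := c) (x := x)).symm

theorem abs_le_supNorm (hf : Periodic f c) (hc : c ≠ 0) (hcont : Continuous f) (t : ℝ) :
    |f t| ≤ supNorm f :=
  le_csSup ((hf.comp abs).compact_of_continuous hc hcont.abs).bddAbove ⟨t, rfl⟩

theorem Rmin_le (hf : Periodic f c) (hc : c ≠ 0) (hcont : Continuous f) (t : ℝ) :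
    Rmin f ≤ f t :=
  csInf_le (hf.compact_of_continuous hc hcont).bddBelow ⟨t, rfl⟩

theorem le_Rmax (hf : Periodic f c) (hc : c ≠ 0) (hcont : Continuous f) (t : ℝ) :
    f t ≤ Rmax f :=
  le_csSup (hf.compact_of_continuous hc hcont).bddAbove ⟨t, rfl⟩

end Function.Periodic

theorem mul_le_of_pos_of_le_div {a b c : ℝ} (ha : 0 < a) (hc : 0 ≤ c) (h : a ≤ b / c) :
    a * c ≤ b := by
  rcases hc.eq_or_lt with rfl | hc
  · rw [div_zero] at h
    exact absurd h ha.not_ge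
  · exact (le_div_iff₀ hc).1 h

theorem half_sq_add_mul_le {a M v U : ℝ} (ha : |a| ≤ M) (hv : 0 ≤ v) (hvU : v ≤ U) :
    1 / 2 * v ^ 2 + a * v ≤ 1 / 2 * U ^ 2 + M * U := by
  have hM : 0 ≤ M := (abs_nonneg a).trans ha
  nlinarith [mul_le_mul_of_nonneg_right (le_of_abs_le ha) hv, mul_le_mul_of_nonneg_left hvU hM,
    mul_le_mul hvU hvU hv (hv.trans hvU)]

theorem half_sq_sub_mul_le {a M v w : ℝ} (ha : |a| ≤ M) (hMw : M ≤ w) (hwv : w ≤ v) :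
    1 / 2 * w ^ 2 - M * w ≤ 1 / 2 * v ^ 2 + a * v := by
  have hv : 0 ≤ v := ((abs_nonneg a).trans (ha.trans hMw)).trans hwv
  nlinarith [mul_le_mul_of_nonneg_right (neg_le_of_abs_le ha) hv,
    mul_nonneg (sub_nonneg.2 hwv) (by linarith : 0 ≤ v + w - 2 * M)]

theorem invariant_curve_K_estimate_general (R : ℝ → ℝ) (ε ω t0 t1 : ℝ)
    (hC : ContDiff ℝ 2 R) (hper : ∀ t, R (t + 1) = R t)
    (hω : 1 < ω) (hωσ : ω + 1 ≤ sigmaR R ε)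
    (hg1 : ω - 1 ≤ t1 - t0) (hg2 : t1 - t0 ≤ ω + 1) :
    2 * Rmin R ^ 2 / (ω + 1) ^ 2 - 2 * supNorm (deriv R) * Rmax R / (ω + 1) ≤
        (1 / 2) * ((R t0 + R t1) / (t1 - t0)) ^ 2 +
          deriv R t0 * ((R t0 + R t1) / (t1 - t0)) ∧
      (1 / 2) * ((R t0 + R t1) / (t1 - t0)) ^ 2 +
          deriv R t0 * ((R t0 + R t1) / (t1 - t0)) ≤
        2 * Rmax R ^ 2 / (ω - 1) ^ 2 + 2 * supNorm (deriv R) * Rmax R / (ω - 1) := by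
  set M := supNorm (deriv R)
  have hcont : Continuous R := hC.continuous
  have hR : Function.Periodic R 1 := hper
  have ha : |deriv R t0| ≤ M :=
    hR.deriv.abs_le_supNorm one_ne_zero (hC.continuous_deriv one_le_two) t0
  have hM : 0 ≤ M := (abs_nonneg _).trans ha
  have hσ : (ω + 1) * (2 * M) ≤ Rmin R :=
    mul_le_of_pos_of_le_div (by linarith) (by positivity) (hωσ.trans (min_le_left _ _))
  have hmin := hR.Rmin_le one_ne_zero hcont
  have hmax := hR.le_Rmax one_ne_zero hcont
  have hRmin : 0 ≤ Rmin R := le_trans (by positivity) hσ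
  have hRmin_le_Rmax : Rmin R ≤ Rmax R := (hmin 0).trans (hmax 0)
  have hsum_lo : 2 * Rmin R ≤ R t0 + R t1 := by linarith [hmin t0, hmin t1]
  have hsum_hi : R t0 + R t1 ≤ 2 * Rmax R := by linarith [hmax t0, hmax t1]
  have hw : 2 * Rmin R / (ω + 1) ≤ (R t0 + R t1) / (t1 - t0) :=
    div_le_div₀ (by linarith) hsum_lo (by linarith) hg2
  have hU : (R t0 + R t1) / (t1 - t0) ≤ 2 * Rmax R / (ω - 1) :=
    div_le_div₀ (by linarith) hsum_hi (by linarith) hg1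
  have hMw : M ≤ 2 * Rmin R / (ω + 1) := by
    rw [le_div_iff₀ (by linarith)]
    nlinarith
  constructor
  · calc 2 * Rmin R ^ 2 / (ω + 1) ^ 2 - 2 * M * Rmax R / (ω + 1)
        ≤ 2 * Rmin R ^ 2 / (ω + 1) ^ 2 - 2 * M * Rmin R / (ω + 1) := by
          gcongr
      _ = 1 / 2 * (2 * Rmin R / (ω + 1)) ^ 2 - M * (2 * Rmin R / (ω + 1)) := by
          rw [div_pow]; ring
      _ ≤ _ := half_sq_sub_mul_le ha hMw hw
  · calc _ ≤ 1 / 2 * (2 * Rmax R / (ω - 1)) ^ 2 + M * (2 * Rmax R / (ω - 1)) :=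
          half_sq_add_mul_le ha (hM.trans (hMw.trans hw)) hU
      _ = 2 * Rmax R ^ 2 / (ω - 1) ^ 2 + 2 * M * Rmax R / (ω - 1) := by
          rw [div_pow]; ring

/-- Let `ω > 1` with `ω + 1 ≤ σ`, and `t0 < t1` with
`ω − 1 ≤ t1 − t0 ≤ ω + 1`. With `v = (R(t0) + R(t1))/(t1 − t0)` one has
`𝒦⁻(ω) ≤ ½v² + R'(t0)·v ≤ 𝒦⁺(ω)`, where
`𝒦⁻(ω) = 2R_min²/(ω+1)² − 2‖R'‖R_max/(ω+1)` and
`𝒦⁺(ω) = 2R_max²/(ω−1)² + 2‖R'‖R_max/(ω−1)`. -/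
theorem invariant_curve_K_estimate (R : ℝ → ℝ) (ε ω t0 t1 : ℝ)
    (hC : ContDiff ℝ 2 R) (hper : ∀ t, R (t + 1) = R t) (hpos : ∀ t, 0 < R t)
    (hnc : ∃ a b, R a ≠ R b)
    (hε : ε ∈ Set.Ioo (0 : ℝ) 1) (hσ : 0 < sigmaR R ε)
    (hω : 1 < ω) (hωσ : ω + 1 ≤ sigmaR R ε)
    (ht : t0 < t1) (hg1 : ω - 1 ≤ t1 - t0) (hg2 : t1 - t0 ≤ ω + 1) :
    2 * Rmin R ^ 2 / (ω + 1) ^ 2 - 2 * supNorm (deriv R) * Rmax R / (ω + 1) ≤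
        (1 / 2) * ((R t0 + R t1) / (t1 - t0)) ^ 2 +
          deriv R t0 * ((R t0 + R t1) / (t1 - t0)) ∧
      (1 / 2) * ((R t0 + R t1) / (t1 - t0)) ^ 2 +
          deriv R t0 * ((R t0 + R t1) / (t1 - t0)) ≤
        2 * Rmax R ^ 2 / (ω - 1) ^ 2 + 2 * supNorm (deriv R) * Rmax R / (ω - 1) :=
  invariant_curve_K_estimate_general R ε ω t0 t1 hC hper hω hωσ hg1 hg2
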